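/- Let P be a distribution on ℝ^d × ℝ, α ∈ (0,1), and let F(w) = E_P[ℓ_α(⟨φ, w⟩, s)]. Suppose P(s = ⟨φ, w⟩) = 0 and E_P‖φ‖ < ∞. Then F is differentiable at w with ∇F(w) = −E_P[(α − 1{s < ⟨φ, w⟩}) φ]. -/

import Mathlib

set_option maxHeartbeats 1000000

open MeasureTheory
open scoped RealInnerProductSpace

/-- The pinball (check) loss at level `α`. -/
noncomputable def pinball (α shat s : ℝ) : ℝ :=
  if s < shat then (1 - α) * (shat - s) else α * (s - shat)

lemma pinball_eq_max {α : ℝ} (h0 : 0 ≤ α) (h1 : α ≤ 1) (a s : ℝ) :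
    pinball α a s = max ((1 - α) * (a - s)) (α * (s - a)) := by
  unfold pinball
  rcases lt_or_ge s a with h | h
  · rw [if_pos h, max_eq_left]; nlinarith
  · rw [if_neg (not_lt.mpr h), max_eq_right]; nlinarith

lemma pinball_lipschitz {α : ℝ} (h0 : 0 ≤ α) (h1 : α ≤ 1) (s : ℝ) :
    LipschitzWith 1 (fun a => pinball α a s) := by
  apply LipschitzWith.of_dist_le_mul
  intro a b
  rw [Real.dist_eq, Real.dist_eq, pinball_eq_max h0 h1, pinball_eq_max h0 h1]
  calc |max ((1 - α) * (a - s)) (α * (s - a)) - max ((1 - α) * (b - s)) (α * (s - b))|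
      ≤ max |(1 - α) * (a - s) - (1 - α) * (b - s)| |α * (s - a) - α * (s - b)| :=
        abs_max_sub_max_le_max _ _ _ _
    _ ≤ 1 * |a - b| := by
        rw [one_mul]
        apply max_le
        · have h : (1 - α) * (a - s) - (1 - α) * (b - s) = (1 - α) * (a - b) := by ring
          rw [h, abs_mul, abs_of_nonneg (by linarith)]
          nlinarith [abs_nonneg (a - b)]
        · have h : α * (s - a) - α * (s - b) = α * (b - a) := by ring
          rw [h, abs_mul, abs_of_nonneg h0, abs_sub_comm b a]
          nlinarith [abs_nonneg (a - b)]

/-- If there is no atom at the kink (`P(s = ⟨φ, w⟩) = 0`) and `E_P‖φ‖ < ∞`, then the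
expected pinball loss `F(w) = E_P[ℓ_α(⟨φ, w⟩, s)]` is differentiable at `w` with gradient
`-E_P[(α - 1{s < ⟨φ, w⟩}) φ]`. -/
theorem expected_pinball_gradient (d : ℕ) (α : ℝ) (hα : α ∈ Set.Ioo (0 : ℝ) 1)
    (P : Measure (EuclideanSpace ℝ (Fin d) × ℝ)) [IsProbabilityMeasure P]
    (w : EuclideanSpace ℝ (Fin d))
    (hkink : P {p | p.2 = ⟪p.1, w⟫} = 0)
    (hφint : Integrable (fun p => ‖p.1‖) P)
    (hloss_int : ∀ w' : EuclideanSpace ℝ (Fin d),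
      Integrable (fun p => pinball α ⟪p.1, w'⟫ p.2) P) :
    HasGradientAt (fun w' => ∫ p, pinball α ⟪p.1, w'⟫ p.2 ∂P)
      (-(∫ p, (α - (if p.2 < ⟪p.1, w⟫ then (1 : ℝ) else 0)) • p.1 ∂P)) w := by
  obtain ⟨hα0, hα1⟩ := hα
  set c : EuclideanSpace ℝ (Fin d) × ℝ → ℝ := fun p => -(α - (if p.2 < ⟪p.1, w⟫ then (1 : ℝ) else 0)) with hc
  set F' : EuclideanSpace ℝ (Fin d) × ℝ → (EuclideanSpace ℝ (Fin d) →L[ℝ] ℝ) := fun p => c p • (innerSL ℝ p.1) with hF'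
  have hmeas_set : MeasurableSet {p : EuclideanSpace ℝ (Fin d) × ℝ | p.2 < ⟪p.1, w⟫} :=
    measurableSet_lt measurable_snd (continuous_fst.inner continuous_const).measurable
  have hc_meas : Measurable c :=
    (measurable_const.sub (Measurable.ite hmeas_set measurable_const measurable_const)).neg
  have hc_bound : ∀ p, |c p| ≤ 1 := by
    intro p
    simp only [hc]
    rw [abs_neg]
    split <;> rw [abs_le] <;> constructor <;> linarith
  have key : Integrable F' P ∧ HasFDerivAt (fun w' => ∫ p, pinball α ⟪p.1, w'⟫ p.2 ∂P)
      (∫ p, F' p ∂P) w := by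
    apply hasFDerivAt_integral_of_dominated_loc_of_lip (bound := fun p : EuclideanSpace ℝ (Fin d) × ℝ => ‖p.1‖)
      (s := Set.univ) Filter.univ_mem
    · filter_upwards with w'
      have : Continuous fun p : EuclideanSpace ℝ (Fin d) × ℝ => pinball α ⟪p.1, w'⟫ p.2 := by
        simp only [pinball_eq_max hα0.le hα1.le]
        exact Continuous.max
          (continuous_const.mul ((continuous_fst.inner continuous_const).sub continuous_snd))
          (continuous_const.mul (continuous_snd.sub (continuous_fst.inner continuous_const)))
      exact this.aestronglyMeasurable
    · exact hloss_int w
    · exact hc_meas.aestronglyMeasurable.smul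
        ((innerSL ℝ).continuous.comp continuous_fst).aestronglyMeasurable
    · filter_upwards with p
      apply LipschitzWith.lipschitzOnWith
      apply LipschitzWith.of_dist_le_mul
      intro a b
      calc dist (pinball α ⟪p.1, a⟫ p.2) (pinball α ⟪p.1, b⟫ p.2)
          ≤ 1 * dist (⟪p.1, a⟫ : ℝ) ⟪p.1, b⟫ :=
            (pinball_lipschitz hα0.le hα1.le p.2).dist_le_mul _ _
        _ ≤ Real.nnabs ‖p.1‖ * dist a b := by
            rw [one_mul, Real.dist_eq, ← inner_sub_right]
            calc |⟪p.1, a - b⟫| ≤ ‖p.1‖ * ‖a - b‖ := abs_real_inner_le_norm _ _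
              _ = Real.nnabs ‖p.1‖ * dist a b := by
                  rw [Real.coe_nnabs, abs_of_nonneg (norm_nonneg _), dist_eq_norm]
    · exact hφint
    · have hne : ∀ᵐ p ∂P, p.2 ≠ ⟪p.1, w⟫ := by
        rw [ae_iff]
        simpa only [ne_eq, not_not] using hkink
      filter_upwards [hne] with p hp
      have hinner : HasFDerivAt (fun w' : EuclideanSpace ℝ (Fin d) => (⟪p.1, w'⟫ : ℝ)) (innerSL ℝ p.1) w :=
        (innerSL ℝ p.1).hasFDerivAt
      have hcont : Continuous fun w' : EuclideanSpace ℝ (Fin d) => (⟪p.1, w'⟫ : ℝ) :=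
        continuous_const.inner continuous_id
      rcases lt_or_gt_of_ne hp with h | h
      · -- p.2 < ⟪p.1, w⟫
        have hev : (fun w' : EuclideanSpace ℝ (Fin d) => pinball α ⟪p.1, w'⟫ p.2) =ᶠ[nhds w]
            (fun w' : EuclideanSpace ℝ (Fin d) => (1 - α) * (⟪p.1, w'⟫ - p.2)) := by
          filter_upwards [ContinuousAt.eventually_lt continuousAt_const hcont.continuousAt h]
            with w' hw'
          unfold pinball
          rw [if_pos hw']
        have hd : HasFDerivAt (fun w' : EuclideanSpace ℝ (Fin d) => (1 - α) * (⟪p.1, w'⟫ - p.2))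
            ((1 - α) • innerSL ℝ p.1) w := (hinner.sub_const p.2).const_mul (1 - α)
        have hceq : c p = 1 - α := by simp only [hc, if_pos h]; ring
        show HasFDerivAt _ (c p • innerSL ℝ p.1) w
        rw [hceq]
        exact hd.congr_of_eventuallyEq hev
      · -- ⟪p.1, w⟫ < p.2
        have hev : (fun w' : EuclideanSpace ℝ (Fin d) => pinball α ⟪p.1, w'⟫ p.2) =ᶠ[nhds w]
            (fun w' : EuclideanSpace ℝ (Fin d) => α * (p.2 - ⟪p.1, w'⟫)) := by
          filter_upwards [ContinuousAt.eventually_lt hcont.continuousAt continuousAt_const h]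
            with w' hw'
          unfold pinball
          rw [if_neg (not_lt.mpr hw'.le)]
        have hd : HasFDerivAt (fun w' : EuclideanSpace ℝ (Fin d) => α * (p.2 - ⟪p.1, w'⟫))
            (α • (-(innerSL ℝ p.1))) w := (hinner.const_sub p.2).const_mul α
        have hceq : c p = -α := by
          simp only [hc, if_neg (not_lt.mpr h.le)]; ring
        show HasFDerivAt _ (c p • innerSL ℝ p.1) w
        rw [hceq, neg_smul, ← smul_neg]
        exact hd.congr_of_eventuallyEq hev
  obtain ⟨hF'int, hderiv⟩ := key
  -- integrability of the vector integrand
  have hg_int : Integrable (fun p : EuclideanSpace ℝ (Fin d) × ℝ => c p • p.1) P := by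
    apply Integrable.mono' hφint
      (hc_meas.aestronglyMeasurable.smul continuous_fst.aestronglyMeasurable)
    filter_upwards with p
    show ‖c p • p.1‖ ≤ ‖p.1‖
    rw [norm_smul]
    calc ‖c p‖ * ‖p.1‖ ≤ 1 * ‖p.1‖ := by
          apply mul_le_mul_of_nonneg_right _ (norm_nonneg _)
          rw [Real.norm_eq_abs]; exact hc_bound p
      _ = ‖p.1‖ := one_mul _
  -- identify the fderiv with toDual of the gradient
  have heq : (∫ p, F' p ∂P) = (InnerProductSpace.toDual ℝ (EuclideanSpace ℝ (Fin d)))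
      (-(∫ p, (α - (if p.2 < ⟪p.1, w⟫ then (1 : ℝ) else 0)) • p.1 ∂P)) := by
    have h1 : -(∫ p, (α - (if p.2 < ⟪p.1, w⟫ then (1 : ℝ) else 0)) • p.1 ∂P)
        = ∫ p, c p • p.1 ∂P := by
      rw [← integral_neg]
      congr 1
      funext p
      rw [hc, neg_smul]
    rw [h1]
    have h2 : (fun p : EuclideanSpace ℝ (Fin d) × ℝ => F' p) = fun p => innerSL ℝ (c p • p.1) := by
      funext p
      rw [hF', _root_.map_smul]
    rw [h2, ContinuousLinearMap.integral_comp_comm (innerSL ℝ) hg_int]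
    ext y
    rw [InnerProductSpace.toDual_apply_apply, innerSL_apply_apply]
  rw [heq] at hderiv
  exact hasGradientAt_iff_hasFDerivAt.mpr hderiv
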